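/- The invariant subalgebra R₀ is generated as a ℂ-algebra by the six elements t₄, t₆, t₈, t₁₀, s₁₀, t₁₂; that is, R₀ equals the ℂ-subalgebra of R generated by {t₄, t₆, t₈, t₁₀, s₁₀, t₁₂}. -/
import Mathlib


open MvPolynomial

/-- The ℂ-algebra endomorphism `μ_λ` of `R = ℂ[u₁,…,u₆]` determined by
`u₁ ↦ λ²u₁, u₂ ↦ u₂, u₃ ↦ λ⁻²u₃, u₄ ↦ λ²u₄, u₅ ↦ u₅, u₆ ↦ λ⁻²u₆`. -/
noncomputable def mu (l : ℂˣ) : MvPolynomial (Fin 6) ℂ →ₐ[ℂ] MvPolynomial (Fin 6) ℂ :=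
  aeval ![C ((l : ℂ) ^ 2) * X 0, X 1, C (((l : ℂ)⁻¹) ^ 2) * X 2,
          C ((l : ℂ) ^ 2) * X 3, X 4, C (((l : ℂ)⁻¹) ^ 2) * X 5]

noncomputable def t4 : MvPolynomial (Fin 6) ℂ := X 1
noncomputable def t6 : MvPolynomial (Fin 6) ℂ := X 4
noncomputable def t8 : MvPolynomial (Fin 6) ℂ := X 0 * X 2
noncomputable def t10 : MvPolynomial (Fin 6) ℂ := X 0 * X 5 + X 2 * X 3
noncomputable def s10 : MvPolynomial (Fin 6) ℂ := X 0 * X 5 - X 2 * X 3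
noncomputable def t12 : MvPolynomial (Fin 6) ℂ := X 3 * X 5

/- ### Auxiliary lemmas -/

lemma monomial_eq_prod (d : Fin 6 →₀ ℕ) (c : ℂ) :
    monomial d c = C c * ∏ i : Fin 6, X i ^ d i := by
  rw [monomial_eq, Finsupp.prod_fintype]; intro i; exact pow_zero _

lemma vec5 (a b c d e f : MvPolynomial (Fin 6) ℂ) : ![a,b,c,d,e,f] 5 = f := rfl

lemma mu_monomial (l : ℂˣ) (d : Fin 6 →₀ ℕ) (c : ℂ) :
    mu l (monomial d c) =
      monomial d ((((l:ℂ) ^ 2) ^ (d 0 + d 3) * (((l:ℂ)⁻¹) ^ 2) ^ (d 2 + d 5)) * c) := by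
  rw [mu, aeval_monomial, Finsupp.prod_fintype _ _ fun i => pow_zero _,
    Fin.prod_univ_six, monomial_eq_prod, Fin.prod_univ_six, vec5]
  simp only [Matrix.cons_val_zero, Matrix.cons_val_one, Matrix.head_cons,
    Matrix.cons_val_two, Matrix.tail_cons, Matrix.cons_val_three, Matrix.cons_val_four,
    Matrix.cons_val_succ, mul_pow, algebraMap_eq, C_pow, C_mul, pow_add]
  ring

lemma coeff_mu (l : ℂˣ) (f : MvPolynomial (Fin 6) ℂ) (d : Fin 6 →₀ ℕ) :
    coeff d (mu l f) =
      (((l:ℂ) ^ 2) ^ (d 0 + d 3) * (((l:ℂ)⁻¹) ^ 2) ^ (d 2 + d 5)) * coeff d f := by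
  conv_lhs => rw [f.as_sum, map_sum]
  rw [coeff_sum]
  simp only [mu_monomial, coeff_monomial]
  rw [Finset.sum_ite_eq' f.support d]
  split_ifs with h
  · ring
  · rw [notMem_support_iff.mp h, mul_zero]

lemma weight_eq {f : MvPolynomial (Fin 6) ℂ} (hf : ∀ l : ℂˣ, mu l f = f)
    {d : Fin 6 →₀ ℕ} (hd : coeff d f ≠ 0) : d 0 + d 3 = d 2 + d 5 := by
  set l : ℂˣ := ⟨2, 2⁻¹, by norm_num, by norm_num⟩ with hl
  have h := coeff_mu l f d
  rw [hf l] at h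
  have hone : (((l:ℂ) ^ 2) ^ (d 0 + d 3) * (((l:ℂ)⁻¹) ^ 2) ^ (d 2 + d 5)) = 1 :=
    mul_right_cancel₀ hd (by rw [one_mul]; exact h.symm)
  have hl2 : (l:ℂ) = 2 := rfl
  rw [hl2] at hone
  have h4 : (4:ℂ) ^ (d 0 + d 3) = (4:ℂ) ^ (d 2 + d 5) := by
    have h2 : ((2:ℂ)⁻¹ ^ 2) ^ (d 2 + d 5) * ((2:ℂ) ^ 2) ^ (d 2 + d 5) = 1 := by
      rw [← mul_pow, ← mul_pow]; norm_num
    calc (4:ℂ) ^ (d 0 + d 3)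
        = ((2:ℂ)^2) ^ (d 0 + d 3) * (((2:ℂ)⁻¹ ^ 2) ^ (d 2 + d 5) * ((2:ℂ) ^ 2) ^ (d 2 + d 5)) := by
          rw [h2, mul_one]; norm_num
      _ = (((2:ℂ)^2) ^ (d 0 + d 3) * ((2:ℂ)⁻¹ ^ 2) ^ (d 2 + d 5)) * ((2:ℂ) ^ 2) ^ (d 2 + d 5) := by
          ring
      _ = (4:ℂ) ^ (d 2 + d 5) := by rw [hone, one_mul]; norm_num
  have hnat : ((4 ^ (d 0 + d 3) : ℕ) : ℂ) = ((4 ^ (d 2 + d 5) : ℕ) : ℂ) := by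
    push_cast; exact h4
  exact Nat.pow_right_injective (by norm_num) (Nat.cast_injective hnat)

lemma cancelC (l : ℂˣ) : C ((l:ℂ) ^ 2) * C (((l:ℂ)⁻¹) ^ 2) = (1 : MvPolynomial (Fin 6) ℂ) := by
  rw [← C_mul, ← mul_pow, mul_inv_cancel₀ l.ne_zero]; norm_num

lemma mulC (l : ℂˣ) (p q : MvPolynomial (Fin 6) ℂ) :
    (C ((l:ℂ)^2) * p) * (C (((l:ℂ)⁻¹)^2) * q) = p * q := by
  rw [mul_mul_mul_comm, cancelC, one_mul]

lemma mulC' (l : ℂˣ) (p q : MvPolynomial (Fin 6) ℂ) :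
    (C (((l:ℂ)⁻¹)^2) * p) * (C ((l:ℂ)^2) * q) = p * q := by
  rw [mul_mul_mul_comm, mul_comm (C (((l:ℂ)⁻¹)^2)), cancelC, one_mul]

lemma mu_fix (l : ℂˣ) (g : MvPolynomial (Fin 6) ℂ)
    (hg : g ∈ ({t4, t6, t8, t10, s10, t12} : Set (MvPolynomial (Fin 6) ℂ))) :
    mu l g = g := by
  simp only [Set.mem_insert_iff, Set.mem_singleton_iff] at hg
  rcases hg with rfl | rfl | rfl | rfl | rfl | rfl
  · simp [mu, t4]
  · simp [mu, t6]
  · simp only [mu, t8, map_mul, aeval_X, Matrix.cons_val_zero, Matrix.cons_val_two,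
      Matrix.tail_cons, Matrix.head_cons]
    rw [mulC]
  · simp only [mu, t10, map_add, map_mul, aeval_X, Matrix.cons_val_zero, Matrix.cons_val_two,
      Matrix.cons_val_three, Matrix.tail_cons, Matrix.head_cons, vec5]
    rw [mulC, mulC']
  · simp only [mu, s10, map_sub, map_mul, aeval_X, Matrix.cons_val_zero, Matrix.cons_val_two,
      Matrix.cons_val_three, Matrix.tail_cons, Matrix.head_cons, vec5]
    rw [mulC, mulC']
  · simp only [mu, t12, map_mul, aeval_X, Matrix.cons_val_three, Matrix.tail_cons,
      Matrix.head_cons, vec5]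
    rw [mulC]

lemma key (S : Subalgebra ℂ (MvPolynomial (Fin 6) ℂ))
    (h02 : X 0 * X 2 ∈ S) (h05 : X 0 * X 5 ∈ S) (h23 : X 2 * X 3 ∈ S)
    (h35 : X 3 * X 5 ∈ S) :
    ∀ a b c e : ℕ, a + b = c + e →
      (X 0 : MvPolynomial (Fin 6) ℂ) ^ a * X 2 ^ c * X 3 ^ b * X 5 ^ e ∈ S := by
  intro a
  induction a with
  | zero =>
    intro b
    induction b with
    | zero =>
      intro c e h
      obtain ⟨rfl, rfl⟩ : c = 0 ∧ e = 0 := by omega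
      simpa using S.one_mem
    | succ b ih =>
      intro c e h
      rcases c with _ | c
      · rcases e with _ | e
        · omega
        · have heq : (X 0 : MvPolynomial (Fin 6) ℂ) ^ 0 * X 2 ^ 0 * X 3 ^ (b+1) * X 5 ^ (e+1)
              = (X 3 * X 5) * ((X 0:MvPolynomial (Fin 6) ℂ) ^ 0 * X 2 ^ 0 * X 3 ^ b * X 5 ^ e) := by
            ring
          rw [heq]; exact S.mul_mem h35 (ih 0 e (by omega))
      · have heq : (X 0 : MvPolynomial (Fin 6) ℂ) ^ 0 * X 2 ^ (c+1) * X 3 ^ (b+1) * X 5 ^ e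
            = (X 2 * X 3) * ((X 0:MvPolynomial (Fin 6) ℂ) ^ 0 * X 2 ^ c * X 3 ^ b * X 5 ^ e) := by
          ring
        rw [heq]; exact S.mul_mem h23 (ih c e (by omega))
  | succ a ih =>
    intro b c e h
    rcases c with _ | c
    · rcases e with _ | e
      · omega
      · have heq : (X 0 : MvPolynomial (Fin 6) ℂ) ^ (a+1) * X 2 ^ 0 * X 3 ^ b * X 5 ^ (e+1)
            = (X 0 * X 5) * ((X 0:MvPolynomial (Fin 6) ℂ) ^ a * X 2 ^ 0 * X 3 ^ b * X 5 ^ e) := by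
          ring
        rw [heq]; exact S.mul_mem h05 (ih b 0 e (by omega))
    · have heq : (X 0 : MvPolynomial (Fin 6) ℂ) ^ (a+1) * X 2 ^ (c+1) * X 3 ^ b * X 5 ^ e
          = (X 0 * X 2) * ((X 0:MvPolynomial (Fin 6) ℂ) ^ a * X 2 ^ c * X 3 ^ b * X 5 ^ e) := by
        ring
      rw [heq]; exact S.mul_mem h02 (ih b c e (by omega))

/-- The invariant subalgebra `R₀ = {f : ∀ λ, μ_λ f = f}` is generated as a ℂ-algebra by
`t₄, t₆, t₈, t₁₀, s₁₀, t₁₂`. -/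
theorem invariants_eq_adjoin :
    ∀ f : MvPolynomial (Fin 6) ℂ,
      (∀ l : ℂˣ, mu l f = f) ↔
        f ∈ Algebra.adjoin ℂ ({t4, t6, t8, t10, s10, t12} :
          Set (MvPolynomial (Fin 6) ℂ)) := by
  intro f
  set S := Algebra.adjoin ℂ ({t4, t6, t8, t10, s10, t12} :
    Set (MvPolynomial (Fin 6) ℂ)) with hS
  have hC : ∀ c : ℂ, C c ∈ S := fun c => by
    rw [← algebraMap_eq]; exact S.algebraMap_mem c
  have hmem : ∀ g ∈ ({t4, t6, t8, t10, s10, t12} : Set (MvPolynomial (Fin 6) ℂ)), g ∈ S :=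
    fun g hg => Algebra.subset_adjoin hg
  have ht4 : (X 1 : MvPolynomial (Fin 6) ℂ) ∈ S := hmem t4 (by simp)
  have ht6 : (X 4 : MvPolynomial (Fin 6) ℂ) ∈ S := hmem t6 (by simp)
  have ht8 : (X 0 * X 2 : MvPolynomial (Fin 6) ℂ) ∈ S := hmem t8 (by simp [t8])
  have ht10 : t10 ∈ S := hmem t10 (by simp)
  have hs10 : s10 ∈ S := hmem s10 (by simp)
  have ht12 : (X 3 * X 5 : MvPolynomial (Fin 6) ℂ) ∈ S := hmem t12 (by simp [t12])
  have hCtwo : (C (2⁻¹:ℂ)) * 2 = (1 : MvPolynomial (Fin 6) ℂ) := by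
    rw [← map_ofNat (C : ℂ →+* MvPolynomial (Fin 6) ℂ) 2, ← C_mul]; norm_num
  have h05 : (X 0 * X 5 : MvPolynomial (Fin 6) ℂ) ∈ S := by
    have heq : C (2⁻¹:ℂ) * (t10 + s10) = (X 0 * X 5 : MvPolynomial (Fin 6) ℂ) := by
      calc C (2⁻¹:ℂ) * (t10 + s10) = C (2⁻¹:ℂ) * (2 * (X 0 * X 5)) := by
            rw [t10, s10]; ring
        _ = (C (2⁻¹:ℂ) * 2) * (X 0 * X 5) := by ring
        _ = X 0 * X 5 := by rw [hCtwo, one_mul]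
    rw [← heq]
    exact S.mul_mem (hC _) (S.add_mem ht10 hs10)
  have h23 : (X 2 * X 3 : MvPolynomial (Fin 6) ℂ) ∈ S := by
    have heq : C (2⁻¹:ℂ) * (t10 - s10) = (X 2 * X 3 : MvPolynomial (Fin 6) ℂ) := by
      calc C (2⁻¹:ℂ) * (t10 - s10) = C (2⁻¹:ℂ) * (2 * (X 2 * X 3)) := by
            rw [t10, s10]; ring
        _ = (C (2⁻¹:ℂ) * 2) * (X 2 * X 3) := by ring
        _ = X 2 * X 3 := by rw [hCtwo, one_mul]
    rw [← heq]
    exact S.mul_mem (hC _) (S.sub_mem ht10 hs10)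
  constructor
  · intro hf
    have hrw : f = ∑ d ∈ f.support, monomial d (coeff d f) := f.as_sum
    rw [hrw]
    apply Subalgebra.sum_mem
    intro d hd
    have hw : d 0 + d 3 = d 2 + d 5 := weight_eq hf (mem_support_iff.mp hd)
    rw [monomial_eq_prod, Fin.prod_univ_six]
    have heq : C (coeff d f) * ((X 0:MvPolynomial (Fin 6) ℂ) ^ d 0 * X 1 ^ d 1 * X 2 ^ d 2
          * X 3 ^ d 3 * X 4 ^ d 4 * X 5 ^ d 5)
        = (C (coeff d f) * X 1 ^ d 1 * X 4 ^ d 4)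
          * ((X 0:MvPolynomial (Fin 6) ℂ) ^ d 0 * X 2 ^ d 2 * X 3 ^ d 3 * X 5 ^ d 5) := by
      ring
    rw [heq]
    exact S.mul_mem
      (S.mul_mem (S.mul_mem (hC _) (S.pow_mem ht4 _)) (S.pow_mem ht6 _))
      (key S ht8 h05 h23 ht12 (d 0) (d 3) (d 2) (d 5) hw)
  · intro hf l
    induction hf using Algebra.adjoin_induction with
    | mem g hg => exact mu_fix l g hg
    | algebraMap r => exact (mu l).commutes r
    | add p q _ _ hp hq => rw [map_add, hp, hq]
    | mul p q _ _ hp hq => rw [map_mul, hp, hq]
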